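/- For every β > 0, the equation d²/2 = R⁽²⁾(βd)/R⁽¹⁾(βd) has exactly one solution d > 0, where R⁽¹⁾(x) = e^{x}(e^{2x} − x − 1) and R⁽²⁾(x) = ( e^{x}(e^{x} − x − 1) + (e^{x} − 1) )·(e^{x} − 1). -/

import Mathlib

/-!
Put `x = βd`. The equation becomes `G x = 2β²` with `G x = x² R⁽¹⁾(x) / R⁽²⁾(x)` (`sqRoneDivRtwo`),
and `G` is continuous on `(0, ∞)`, squeezed between `x²` and `2x eˣ`, and strictly increasing, so
it takes the value `2β²` exactly once. Each of the three inequalities behind this (the two bounds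
and the positivity of the numerator of `G'`) becomes evident after writing
`eˣ = 1 + x + x²/2 + v` with `v ≥ 0`: the difference of the two sides is then a polynomial in `x`
and `v` with nonnegative coefficients.
-/

open Real Filter

/-- `R⁽¹⁾(x) = e^x(e^{2x} − x − 1)`. -/
noncomputable def Rone (x : ℝ) : ℝ := exp x * (exp (2 * x) - x - 1)

/-- `R⁽²⁾(x) = (e^x(e^x − x − 1) + (e^x − 1))·(e^x − 1)`. -/
noncomputable def Rtwo (x : ℝ) : ℝ :=
  (exp x * (exp x - x - 1) + (exp x - 1)) * (exp x - 1)

open Set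

noncomputable def Rone' (x : ℝ) : ℝ :=
  exp x * (exp (2 * x) - x - 1) + exp x * (2 * exp (2 * x) - 1)

noncomputable def Rtwo' (x : ℝ) : ℝ :=
  (exp x * (exp x - x - 1) + exp x * (exp x - 1) + exp x) * (exp x - 1)
    + (exp x * (exp x - x - 1) + (exp x - 1)) * exp x

noncomputable def sqRoneDivRtwo (x : ℝ) : ℝ := x ^ 2 * Rone x / Rtwo x

lemma hasDerivAt_Rone (x : ℝ) : HasDerivAt Rone (Rone' x) x := by
  have h2 : HasDerivAt (fun y ↦ exp (2 * y)) (2 * exp (2 * x)) x := by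
    simpa [mul_comm] using ((hasDerivAt_id x).const_mul 2).exp
  exact (hasDerivAt_exp x).fun_mul ((h2.sub (hasDerivAt_id x)).sub_const 1)

lemma hasDerivAt_Rtwo (x : ℝ) : HasDerivAt Rtwo (Rtwo' x) x := by
  have he := hasDerivAt_exp x
  have h1 : HasDerivAt (fun y ↦ exp y - y - 1) (exp x - 1) x := by
    simpa using (he.sub (hasDerivAt_id x)).sub_const 1
  exact ((he.mul h1).add (he.sub_const 1)).mul (he.sub_const 1)

lemma Rone_pos {x : ℝ} (hx : 0 < x) : 0 < Rone x := by
  have := add_one_lt_exp (by positivity : 2 * x ≠ 0)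
  exact mul_pos (exp_pos x) (by linarith)

lemma Rtwo_pos {x : ℝ} (hx : 0 < x) : 0 < Rtwo x := by
  have := add_one_lt_exp hx.ne'
  have := exp_pos x
  unfold Rtwo
  exact mul_pos (by nlinarith) (by linarith)

lemma exists_exp_eq_quadratic_add {x : ℝ} (hx : 0 ≤ x) :
    ∃ v ≥ 0, exp x = 1 + x + x ^ 2 / 2 + v :=
  ⟨_, sub_nonneg.2 (quadratic_le_exp_of_nonneg hx), by ring⟩

lemma Rone_sub_Rtwo_eq {x v : ℝ} (hv : exp x = 1 + x + x ^ 2 / 2 + v) :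
    Rone x - Rtwo x
      = x + 2*x^2 + 2*x^3 + (5/4)*x^4 + (1/4)*x^5 + 2*v + 2*v*x
        + 3*v*x^2 + v*x^3 + v^2 + v^2*x := by
  simp only [Rone, Rtwo, two_mul, exp_add, hv]
  ring

lemma two_exp_mul_Rtwo_sub_mul_Rone_eq {x v : ℝ} (hv : exp x = 1 + x + x ^ 2 / 2 + v) :
    2 * exp x * Rtwo x - x * Rone x
      = x^2 + 2*x^3 + (5/2)*x^4 + (9/4)*x^5 + (3/2)*x^6
        + (5/8)*x^7 + (1/8)*x^8 + 4*v*x + 9*v*x^2 + 10*v*x^3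
        + (15/2)*v*x^4 + (15/4)*v*x^5 + v*x^6 + 4*v^2 + 11*v^2*x
        + 12*v^2*x^2 + (15/2)*v^2*x^3 + 3*v^2*x^4 + 6*v^3 + 5*v^3*x
        + 4*v^3*x^2 + 2*v^4 := by
  simp only [Rone, Rtwo, two_mul, exp_add, hv]
  ring

lemma sqRoneDivRtwo_deriv_numerator_eq {x v : ℝ} (hv : exp x = 1 + x + x ^ 2 / 2 + v) :
    (2 * x * Rone x + x ^ 2 * Rone' x) * Rtwo x - x ^ 2 * Rone x * Rtwo' x
      = x * exp x * (x^3 + 5*x^4 + 8*x^5 + 6*x^6 + (5/2)*x^7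
        + (1/2)*x^8 + 6*v*x^2 + 24*v*x^3 + 30*v*x^4 + (39/2)*v*x^5
        + 7*v*x^6 + v*x^7 + (1/8)*v*x^8 + 12*v^2*x + 36*v^2*x^2
        + 40*v^2*x^3 + 24*v^2*x^4 + 6*v^2*x^5 + v^2*x^6 + 8*v^3 + 22*v^3*x
        + 28*v^3*x^2 + 12*v^3*x^3 + 3*v^3*x^4 + 8*v^4 + 8*v^4*x
        + 4*v^4*x^2 + 2*v^5) := by
  simp only [Rone, Rtwo, Rone', Rtwo', two_mul, exp_add, hv]
  ring

lemma Rtwo_le_Rone {x : ℝ} (hx : 0 < x) : Rtwo x ≤ Rone x := by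
  obtain ⟨v, hv0, hv⟩ := exists_exp_eq_quadratic_add hx.le
  rw [← sub_nonneg, Rone_sub_Rtwo_eq hv]
  positivity

lemma mul_Rone_le {x : ℝ} (hx : 0 < x) : x * Rone x ≤ 2 * exp x * Rtwo x := by
  obtain ⟨v, hv0, hv⟩ := exists_exp_eq_quadratic_add hx.le
  rw [← sub_nonneg, two_exp_mul_Rtwo_sub_mul_Rone_eq hv]
  positivity

lemma sqRoneDivRtwo_deriv_numerator_pos {x : ℝ} (hx : 0 < x) :
    0 < (2 * x * Rone x + x ^ 2 * Rone' x) * Rtwo x - x ^ 2 * Rone x * Rtwo' x := by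
  obtain ⟨v, hv0, hv⟩ := exists_exp_eq_quadratic_add hx.le
  rw [sqRoneDivRtwo_deriv_numerator_eq hv]
  positivity

lemma hasDerivAt_sqRoneDivRtwo {x : ℝ} (hx : 0 < x) :
    HasDerivAt sqRoneDivRtwo
      (((2 * x * Rone x + x ^ 2 * Rone' x) * Rtwo x - x ^ 2 * Rone x * Rtwo' x)
        / Rtwo x ^ 2) x := by
  have hsq : HasDerivAt (fun y ↦ y ^ 2) (2 * x) x := by simpa using hasDerivAt_pow 2 x
  exact (hsq.mul (hasDerivAt_Rone x)).div (hasDerivAt_Rtwo x) (Rtwo_pos hx).ne'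

lemma continuousOn_sqRoneDivRtwo : ContinuousOn sqRoneDivRtwo (Ioi 0) := fun _ hx ↦
  (hasDerivAt_sqRoneDivRtwo hx).continuousAt.continuousWithinAt

lemma strictMonoOn_sqRoneDivRtwo : StrictMonoOn sqRoneDivRtwo (Ioi 0) := by
  refine strictMonoOn_of_deriv_pos (convex_Ioi 0) continuousOn_sqRoneDivRtwo fun x hx ↦ ?_
  rw [interior_Ioi] at hx
  rw [(hasDerivAt_sqRoneDivRtwo hx).deriv]
  exact div_pos (sqRoneDivRtwo_deriv_numerator_pos hx) (pow_pos (Rtwo_pos hx) 2)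

lemma sq_le_sqRoneDivRtwo {x : ℝ} (hx : 0 < x) : x ^ 2 ≤ sqRoneDivRtwo x := by
  rw [sqRoneDivRtwo, le_div_iff₀ (Rtwo_pos hx)]
  exact mul_le_mul_of_nonneg_left (Rtwo_le_Rone hx) (sq_nonneg x)

lemma sqRoneDivRtwo_le {x : ℝ} (hx : 0 < x) : sqRoneDivRtwo x ≤ 2 * x * exp x := by
  rw [sqRoneDivRtwo, div_le_iff₀ (Rtwo_pos hx)]
  nlinarith [mul_Rone_le hx]

lemma exists_sqRoneDivRtwo_eq {c : ℝ} (hc : 0 < c) : ∃ x, 0 < x ∧ sqRoneDivRtwo x = c := by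
  set a := min 1 (c / 6)
  set b := max 1 c
  have ha : 0 < a := lt_min one_pos (by positivity)
  have hab : a ≤ b := (min_le_left _ _).trans (le_max_left _ _)
  have hfa : sqRoneDivRtwo a ≤ c := calc
    sqRoneDivRtwo a ≤ 2 * a * exp a := sqRoneDivRtwo_le ha
    _ ≤ 2 * (c / 6) * 3 := by
      gcongr
      · exact min_le_right _ _
      · exact (exp_le_exp.2 (min_le_left _ _)).trans exp_one_lt_three.le
    _ = c := by ring
  have hfb : c ≤ sqRoneDivRtwo b := calc
    c ≤ b := le_max_right _ _
    _ ≤ b ^ 2 := by nlinarith [le_max_left 1 c]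
    _ ≤ sqRoneDivRtwo b := sq_le_sqRoneDivRtwo (ha.trans_le hab)
  obtain ⟨x, hx, hfx⟩ := intermediate_value_Icc hab
    (continuousOn_sqRoneDivRtwo.mono fun y hy ↦ ha.trans_le hy.1) ⟨hfa, hfb⟩
  exact ⟨x, ha.trans_le hx.1, hfx⟩

lemma sq_div_two_eq_Rtwo_div_Rone_iff {β d : ℝ} (hβ : 0 < β) (hd : 0 < d) :
    d ^ 2 / 2 = Rtwo (β * d) / Rone (β * d) ↔ sqRoneDivRtwo (β * d) = 2 * β ^ 2 := by
  have h1 := (Rone_pos (mul_pos hβ hd)).ne'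
  have h2 := (Rtwo_pos (mul_pos hβ hd)).ne'
  rw [sqRoneDivRtwo, div_eq_div_iff two_ne_zero h1, div_eq_iff h2]
  constructor <;> intro h
  · linear_combination β ^ 2 * h
  · exact mul_left_cancel₀ (pow_ne_zero 2 hβ.ne') (by linear_combination h)

/-- For every `β > 0` the equation `d²/2 = R⁽²⁾(βd)/R⁽¹⁾(βd)` has exactly one
positive solution. -/
theorem critical_point_unique (β : ℝ) (hβ : 0 < β) :
    ∃! d : ℝ, 0 < d ∧ d ^ 2 / 2 = Rtwo (β * d) / Rone (β * d) := by
  obtain ⟨x, hx, hfx⟩ := exists_sqRoneDivRtwo_eq (by positivity : 0 < 2 * β ^ 2)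
  have hxβ : 0 < x / β := div_pos hx hβ
  have hβxβ : β * (x / β) = x := mul_div_cancel₀ x hβ.ne'
  refine ⟨x / β, ⟨hxβ, (sq_div_two_eq_Rtwo_div_Rone_iff hβ hxβ).2 (by rw [hβxβ, hfx])⟩, ?_⟩
  rintro d ⟨hd, hdeq⟩
  have hfd := (sq_div_two_eq_Rtwo_div_Rone_iff hβ hd).1 hdeq
  refine mul_left_cancel₀ hβ.ne' (strictMonoOn_sqRoneDivRtwo.injOn (mul_pos hβ hd)
    (mul_pos hβ hxβ) ?_)
  rw [hfd, hβxβ, hfx]
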